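/- The Bargmann transform intertwines the creation operator A = -d/dx + x with multiplication and the annihilation operator A† = d/dx + x with differentiation: for Schwartz functions f on ℝ, 𝔙_1(Af)(z) = √2 · z · 𝔙_1 f(z) and 𝔙_1(A†f)(z) = √2 · (d/dz) 𝔙_1 f(z) for all z ∈ ℂ. -/

import Mathlib

open MeasureTheory Complex Finset

noncomputable section

/-- `⟨z,w⟩ = ∑ z_j w_j` (bilinear pairing on `ℂ^d`). -/
def bilin {d : ℕ} (z w : Fin d → ℂ) : ℂ := ∑ j, z j * w j

/-- Hermitian scalar product `(z,w) = ∑ z_j conj(w_j)` on `ℂ^d`. -/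
def herm {d : ℕ} (z w : Fin d → ℂ) : ℂ := ∑ j, z j * starRingEnd ℂ (w j)

/-- Euclidean norm `|z|` on `ℂ^d`. -/
def cnorm {d : ℕ} (z : Fin d → ℂ) : ℝ := Real.sqrt (∑ j, ‖z j‖ ^ 2)

/-- Euclidean norm `|x|` on `ℝ^d`. -/
def rnorm {d : ℕ} (x : Fin d → ℝ) : ℝ := Real.sqrt (∑ j, x j ^ 2)

/-- `|α| = α_1 + ⋯ + α_d` for a multi-index. -/
def mlen {d : ℕ} (α : Fin d → ℕ) : ℕ := ∑ i, α i

/-- `α! = α_1! ⋯ α_d!` for a multi-index. -/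
def mfact {d : ℕ} (α : Fin d → ℕ) : ℕ := ∏ i, Nat.factorial (α i)

/-- The Bargmann transform
`𝔙_d f (z) = π^{-d/4} ∫ exp(-(1/2)(⟨z,z⟩+|y|²) + √2 ⟨z,y⟩) f(y) dy`. -/
def bargmann (d : ℕ) (f : (Fin d → ℝ) → ℂ) (z : Fin d → ℂ) : ℂ :=
  (((Real.pi ^ ((d : ℝ) / 4))⁻¹ : ℝ) : ℂ) *
    ∫ y : Fin d → ℝ, Complex.exp (-(1/2) * (bilin z z + (∑ j, (y j : ℂ) ^ 2))
      + (Real.sqrt 2 : ℂ) * bilin z (fun j => (y j : ℂ))) * f y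

/-- The Gaussian measure `dμ(z) = π^{-d} e^{-|z|²} dλ(z)` on `ℂ^d`. -/
def gaussMeasure (d : ℕ) : Measure (Fin d → ℂ) :=
  (volume : Measure (Fin d → ℂ)).withDensity
    fun z => ENNReal.ofReal ((Real.pi ^ d)⁻¹ * Real.exp (-(∑ j, ‖z j‖ ^ 2)))

/-- Partial derivative `∂_i` (real variables, real values). -/
def pderivR {d : ℕ} (i : Fin d) (f : (Fin d → ℝ) → ℝ) : (Fin d → ℝ) → ℝ :=
  fun x => deriv (fun t : ℝ => f (Function.update x i t)) (x i)

/-- Multi-index derivative `∂^α` (real variables, real values). -/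
def pdR {d : ℕ} (α : Fin d → ℕ) (f : (Fin d → ℝ) → ℝ) : (Fin d → ℝ) → ℝ :=
  (List.finRange d).foldr (fun i g => (pderivR i)^[α i] g) f

/-- Partial derivative `∂_i` (real variables, complex values). -/
def pderivC {d : ℕ} (i : Fin d) (f : (Fin d → ℝ) → ℂ) : (Fin d → ℝ) → ℂ :=
  fun x => deriv (fun t : ℝ => f (Function.update x i t)) (x i)

/-- Multi-index derivative `∂^α` (real variables, complex values). -/
def pdC {d : ℕ} (α : Fin d → ℕ) (f : (Fin d → ℝ) → ℂ) : (Fin d → ℝ) → ℂ :=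
  (List.finRange d).foldr (fun i g => (pderivC i)^[α i] g) f

/-- The Hermite function `h_α(x) = π^{-d/4} (-1)^{|α|} (2^{|α|} α!)^{-1/2}
e^{|x|²/2} ∂^α e^{-|x|²}`. -/
def hermiteFn (d : ℕ) (α : Fin d → ℕ) (x : Fin d → ℝ) : ℝ :=
  (Real.pi ^ ((d : ℝ) / 4))⁻¹ * (-1) ^ mlen α * (Real.sqrt (2 ^ mlen α * mfact α))⁻¹ *
    Real.exp ((∑ i, x i ^ 2) / 2) * pdR α (fun y => Real.exp (-(∑ i, y i ^ 2))) x

/-- The normalized monomial `e_α(z) = z^α / √(α!)`. -/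
def fockMono (d : ℕ) (α : Fin d → ℕ) (z : Fin d → ℂ) : ℂ :=
  (∏ j, z j ^ α j) / ((Real.sqrt (mfact α) : ℝ) : ℂ)

/-- The Hermite operator `ℛ = -Δ + |x|²` (complex-valued functions). -/
def hermiteOp (d : ℕ) (f : (Fin d → ℝ) → ℂ) : (Fin d → ℝ) → ℂ :=
  fun x => -(∑ i, pderivC i (pderivC i f) x) + (((∑ i, x i ^ 2 : ℝ)) : ℂ) * f x

/-- The Hermite operator `ℛ = -Δ + |x|²` (real-valued functions). -/
def hermiteOpR (d : ℕ) (f : (Fin d → ℝ) → ℝ) : (Fin d → ℝ) → ℝ :=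
  fun x => -(∑ i, pderivR i (pderivR i f) x) + (∑ i, x i ^ 2) * f x

/-- Hermite coefficient `c_α = (f, h_α)_{L²}`. -/
def hermCoeff (d : ℕ) (f : (Fin d → ℝ) → ℂ) (α : Fin d → ℕ) : ℂ :=
  ∫ x : Fin d → ℝ, f x * ((hermiteFn d α x : ℝ) : ℂ)

/-- Membership in the Pilipović space `ℋ_s(ℝ^d)` (s > 0): the Hermite
coefficients satisfy `|c_α| ≲ e^{-r|α|^{1/(2s)}}` for some `r > 0`. -/
def MemPilipovic (d : ℕ) (s : ℝ) (f : (Fin d → ℝ) → ℂ) : Prop :=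
  MemLp f 2 (volume : Measure (Fin d → ℝ)) ∧
    ∃ r > (0:ℝ), ∃ C : ℝ, ∀ α : Fin d → ℕ,
      ‖hermCoeff d f α‖ ≤ C * Real.exp (-r * (mlen α : ℝ) ^ (1 / (2 * s)))

/-- Membership in the Pilipović space `ℋ_s(ℝ^d)` including `s = 0`
(finite Hermite series). -/
def MemPilipovicH (d : ℕ) (s : ℝ) (f : (Fin d → ℝ) → ℂ) : Prop :=
  if s = 0 then
    ∃ (S : Finset (Fin d → ℕ)) (c : (Fin d → ℕ) → ℂ),
      ∀ x, f x = ∑ α ∈ S, c α * ((hermiteFn d α x : ℝ) : ℂ)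
  else MemPilipovic d s f

/-- Membership in the Gelfand–Shilov space `𝒮_s(ℝ^d)`:
`|∂^β f(x)| ≲ h^{|β|} (β!)^s e^{-k|x|^{1/s}}` for some `h, k > 0`. -/
def MemGelfandShilov (d : ℕ) (s : ℝ) (f : (Fin d → ℝ) → ℂ) : Prop :=
  ContDiff ℝ (⊤ : ℕ∞) f ∧
    ∃ h > (0:ℝ), ∃ k > (0:ℝ), ∃ C : ℝ, ∀ (β : Fin d → ℕ) (x : Fin d → ℝ),
      ‖pdC β f x‖ ≤ C * h ^ mlen β * (mfact β : ℝ) ^ s * Real.exp (-k * rnorm x ^ (1 / s))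

/-- Holomorphic partial derivative `∂_i` in the `i`-th complex variable. -/
def cpderiv {d : ℕ} (i : Fin d) (f : (Fin d → ℂ) → ℂ) : (Fin d → ℂ) → ℂ :=
  fun z => deriv (fun t : ℂ => f (Function.update z i t)) (z i)

/-- Multi-index holomorphic derivative `∂^α` on functions `ℂ^d → ℂ`. -/
def cpd {d : ℕ} (α : Fin d → ℕ) (f : (Fin d → ℂ) → ℂ) : (Fin d → ℂ) → ℂ :=
  (List.finRange d).foldr (fun i g => (cpderiv i)^[α i] g) f

/-- Antiholomorphic multi-index derivative `∂̄^α`: for `f` conjugate-analytic,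
`∂̄^α f (w) = (∂^α G)(conj w)` where `G(u) = f(conj u)`. -/
def cpdBar {d : ℕ} (α : Fin d → ℕ) (f : (Fin d → ℂ) → ℂ) : (Fin d → ℂ) → ℂ :=
  fun w => cpd α (fun u => f (fun j => starRingEnd ℂ (u j))) (fun j => starRingEnd ℂ (w j))

/-- Mixed derivative `∂_z^α ∂̄_w^β a (z,w)`. -/
def mxd {d : ℕ} (α β : Fin d → ℕ) (a : (Fin d → ℂ) → (Fin d → ℂ) → ℂ)
    (z w : Fin d → ℂ) : ℂ :=
  cpd α (fun z' => cpdBar β (fun w' => a z' w') w) z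

/-- `a(z,w)` is analytic in `z` and conjugate-analytic in `w`, i.e. the function
`(z,w) ↦ a(z, conj w)` is entire on `ℂ^d × ℂ^d`. -/
def IsWickSymbol (d : ℕ) (a : (Fin d → ℂ) → (Fin d → ℂ) → ℂ) : Prop :=
  ∀ p : (Fin d → ℂ) × (Fin d → ℂ),
    AnalyticAt ℂ (fun q : (Fin d → ℂ) × (Fin d → ℂ) =>
      a q.1 (fun j => starRingEnd ℂ (q.2 j))) p

/-- The Wick (analytic pseudodifferential) operator
`Op_𝔙(a)F(z) = π^{-d} ∫ a(z,w) F(w) e^{(z-w,w)} dλ(w)`. -/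
def wickOp (d : ℕ) (a : (Fin d → ℂ) → (Fin d → ℂ) → ℂ)
    (F : (Fin d → ℂ) → ℂ) (z : Fin d → ℂ) : ℂ :=
  (((Real.pi ^ d : ℝ)⁻¹ : ℝ) : ℂ) *
    ∫ w : Fin d → ℂ, a z w * F w * Complex.exp (herm (z - w) w)

/-- The anti-Wick operator `Op_𝔙^{aw}(a₀)F(z) = π^{-d} ∫ a₀(w) F(w) e^{(z-w,w)} dλ(w)`. -/
def antiWickOp (d : ℕ) (a0 : (Fin d → ℂ) → ℂ)
    (F : (Fin d → ℂ) → ℂ) (z : Fin d → ℂ) : ℂ :=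
  wickOp d (fun _ w => a0 w) F z

/-- The coefficient `c(F,α)` of an entire function `F = ∑_α c(F,α) e_α`. -/
def fockCoeff (d : ℕ) (F : (Fin d → ℂ) → ℂ) (α : Fin d → ℕ) : ℂ :=
  cpd α F 0 / ((Real.sqrt (mfact α) : ℝ) : ℂ)

/-- Membership in `𝒜_s(ℂ^d)` (s > 0): entire with
`|c(F,α)| ≲ e^{-r|α|^{1/(2s)}}` for some `r > 0`. -/
def MemAs (d : ℕ) (s : ℝ) (F : (Fin d → ℂ) → ℂ) : Prop :=
  (∀ z, AnalyticAt ℂ F z) ∧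
    ∃ r > (0:ℝ), ∃ C : ℝ, ∀ α : Fin d → ℕ,
      ‖fockCoeff d F α‖ ≤ C * Real.exp (-r * (mlen α : ℝ) ^ (1 / (2 * s)))

/-- Membership in the dual `𝒜_s'(ℂ^d)`: entire with
`|c(F,α)| ≲ e^{r|α|^{1/(2s)}}` for every `r > 0`. -/
def MemAs' (d : ℕ) (s : ℝ) (F : (Fin d → ℂ) → ℂ) : Prop :=
  (∀ z, AnalyticAt ℂ F z) ∧
    ∀ r > (0:ℝ), ∃ C : ℝ, ∀ α : Fin d → ℕ,
      ‖fockCoeff d F α‖ ≤ C * Real.exp (r * (mlen α : ℝ) ^ (1 / (2 * s)))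

/-- Membership in `𝒜_0(ℂ^d)`: analytic polynomials (finite sums of `e_α`). -/
def MemA0 (d : ℕ) (F : (Fin d → ℂ) → ℂ) : Prop :=
  ∃ (S : Finset (Fin d → ℕ)) (c : (Fin d → ℕ) → ℂ),
    ∀ z, F z = ∑ α ∈ S, c α * fockMono d α z

/-- The weighted coefficient seminorm `sup_α ‖c(F,α)‖ e^{t|α|^{1/(2s)}}`. -/
def fockSeminorm (d : ℕ) (s t : ℝ) (F : (Fin d → ℂ) → ℂ) : ℝ :=
  ⨆ α : Fin d → ℕ, ‖fockCoeff d F α‖ * Real.exp (t * (mlen α : ℝ) ^ (1 / (2 * s)))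

/-- Multi-indices `α` with `|α| ≤ N`. -/
def multiIdxLe (d N : ℕ) : Finset (Fin d → ℕ) :=
  (Fintype.piFinset fun _ : Fin d => Finset.range (N+1)).filter fun α => mlen α ≤ N

/-- Multi-indices `α` with `|α| = N`. -/
def multiIdxEq (d N : ℕ) : Finset (Fin d → ℕ) :=
  (Fintype.piFinset fun _ : Fin d => Finset.range (N+1)).filter fun α => mlen α = N

/-- Fourier transform `(2π)^{-d/2} ∫ f(x) e^{-i⟨x,ξ⟩} dx`. -/
def ftransform (d : ℕ) (f : (Fin d → ℝ) → ℂ) (ξ : Fin d → ℝ) : ℂ :=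
  ((((2*Real.pi) ^ ((d:ℝ)/2))⁻¹ : ℝ) : ℂ) *
    ∫ x : Fin d → ℝ, f x * Complex.exp (-Complex.I * ∑ j, (x j : ℂ) * (ξ j : ℂ))

/-- The Kohn–Nirenberg operator
`Op(b)f(x) = (2π)^{-d/2} ∫ b(x,ξ) f̂(ξ) e^{i⟨x,ξ⟩} dξ`. -/
def knOp (d : ℕ) (b : (Fin d → ℝ) → (Fin d → ℝ) → ℂ) (f : (Fin d → ℝ) → ℂ)
    (x : Fin d → ℝ) : ℂ :=
  ((((2*Real.pi) ^ ((d:ℝ)/2))⁻¹ : ℝ) : ℂ) *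
    ∫ ξ : Fin d → ℝ, b x ξ * ftransform d f ξ *
      Complex.exp (Complex.I * ∑ j, (x j : ℂ) * (ξ j : ℂ))

/-- The Weyl operator
`Op^w(a₀)f(x) = (2π)^{-d} ∬ a₀((x+y)/2, ξ) f(y) e^{i⟨x-y,ξ⟩} dy dξ`. -/
def weylOp (d : ℕ) (a0 : (Fin d → ℝ) → (Fin d → ℝ) → ℂ) (f : (Fin d → ℝ) → ℂ)
    (x : Fin d → ℝ) : ℂ :=
  ((((2*Real.pi) ^ d)⁻¹ : ℝ) : ℂ) *
    ∫ p : (Fin d → ℝ) × (Fin d → ℝ),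
      a0 (fun j => (x j + p.1 j)/2) p.2 * f p.1 *
        Complex.exp (Complex.I * ∑ j, ((x j - p.1 j : ℝ) : ℂ) * (p.2 j : ℂ))

/-- Japanese bracket `⟨z⟩ = (1+|z|²)^{1/2}` on `ℂ^d`. -/
def jbC {d : ℕ} (z : Fin d → ℂ) : ℝ := Real.sqrt (1 + ∑ j, ‖z j‖ ^ 2)

/-- Japanese bracket `⟨(x,ξ)⟩` on `ℝ^{2d}`. -/
def jbR2 {d : ℕ} (x ξ : Fin d → ℝ) : ℝ := Real.sqrt (1 + (∑ j, x j ^ 2 + ∑ j, ξ j ^ 2))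

/-- `∂_x^α ∂_ξ^β` of a real-valued function on `ℝ^{2d}` (curried). -/
def pdR2 {d : ℕ} (α β : Fin d → ℕ) (ω : (Fin d → ℝ) → (Fin d → ℝ) → ℝ)
    (x ξ : Fin d → ℝ) : ℝ :=
  pdR α (fun x' => pdR β (fun ξ' => ω x' ξ') ξ) x

/-- `∂_x^α ∂_ξ^β` of a complex-valued symbol on `ℝ^{2d}` (curried). -/
def pdC2 {d : ℕ} (α β : Fin d → ℕ) (a : (Fin d → ℝ) → (Fin d → ℝ) → ℂ)
    (x ξ : Fin d → ℝ) : ℂ :=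
  pdC α (fun x' => pdC β (fun ξ' => a x' ξ') ξ) x

end
/-- The one dimensional Bargmann transform. -/
noncomputable def bargmannOne (f : ℝ → ℂ) (z : ℂ) : ℂ :=
  (((Real.pi ^ ((1 : ℝ) / 4))⁻¹ : ℝ) : ℂ) *
    ∫ y : ℝ, Complex.exp (-(1/2) * (z ^ 2 + (y : ℂ) ^ 2)
      + (Real.sqrt 2 : ℂ) * z * (y : ℂ)) * f y

open Filter

noncomputable def Kber (z : ℂ) (y : ℝ) : ℂ :=
  Complex.exp (-(1/2) * (z ^ 2 + (y : ℂ) ^ 2) + (Real.sqrt 2 : ℂ) * z * (y : ℂ))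

lemma bargmannOne_eq (g : ℝ → ℂ) (z : ℂ) :
    bargmannOne g z = (((Real.pi ^ ((1 : ℝ) / 4))⁻¹ : ℝ) : ℂ) * ∫ y : ℝ, Kber z y * g y := rfl

lemma Kber_norm (z : ℂ) (y : ℝ) :
    ‖Kber z y‖ = Real.exp (-(1/2)*(z^2).re - (1/2)*y^2 + Real.sqrt 2 * z.re * y) := by
  rw [Kber, Complex.norm_exp]
  congr 1
  simp [Complex.add_re, Complex.mul_re, Complex.ofReal_re, Complex.ofReal_im,
    ← Complex.ofReal_pow]
  ring

lemma Kber_norm_le (z : ℂ) (y : ℝ) (R : ℝ) (hz : ‖z‖ ≤ R) :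
    ‖Kber z y‖ ≤ Real.exp ((5/2)*R^2) * Real.exp (-(1/4)*y^2) := by
  rw [Kber_norm, ← Real.exp_add]
  apply Real.exp_le_exp.2
  have h1 : |(z^2).re| ≤ R^2 := by
    calc |(z^2).re| ≤ ‖z^2‖ := Complex.abs_re_le_norm _
    _ = (‖z‖)^2 := by rw [norm_pow]
    _ ≤ R^2 := by nlinarith [norm_nonneg z]
  have h2 : |z.re| ≤ R := (Complex.abs_re_le_norm z).trans hz
  have key : Real.sqrt 2 * z.re * y ≤ y^2/4 + 2*z.re^2 := by
    nlinarith [sq_nonneg (y/2 - Real.sqrt 2 * z.re), Real.sq_sqrt (by norm_num : (2:ℝ) ≥ 0)]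
  have h3 : z.re^2 ≤ R^2 := by nlinarith [abs_le.1 h2, abs_nonneg z.re]
  have h4 := abs_le.1 h1
  linarith

lemma Kber_continuous (z : ℂ) : Continuous (fun y : ℝ => Kber z y) := by
  unfold Kber; fun_prop

lemma Kber_hasDerivAt_y (z : ℂ) (y : ℝ) :
    HasDerivAt (fun t : ℝ => Kber z t) (((Real.sqrt 2 : ℂ) * z - (y:ℂ)) * Kber z y) y := by
  have h0 : HasDerivAt (fun t : ℝ => (t : ℂ)) 1 y := by
    simpa using (hasDerivAt_id y).ofReal_comp
  have hE : HasDerivAt (fun t : ℝ =>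
      -(1/2) * (z ^ 2 + (t : ℂ) ^ 2) + (Real.sqrt 2 : ℂ) * z * (t : ℂ))
      ((Real.sqrt 2 : ℂ) * z - (y:ℂ)) y := by
    have h1 : HasDerivAt (fun t : ℝ => (t:ℂ)^2) (2*(y:ℂ)) y := by
      have := h0.pow 2; simp at this; exact this
    have h2 := ((h1.const_add (z^2)).const_mul (-(1/2) : ℂ)).add
      (h0.const_mul ((Real.sqrt 2 : ℂ) * z))
    exact h2.congr_deriv (by ring)
  rw [show (((Real.sqrt 2:ℂ) * z - (y:ℂ)) * Kber z y) = Kber z y * ((Real.sqrt 2:ℂ) * z - (y:ℂ))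
    from mul_comm _ _]
  exact hE.cexp

lemma Kber_hasDerivAt_z (z : ℂ) (y : ℝ) :
    HasDerivAt (fun w : ℂ => Kber w y) ((-z + (Real.sqrt 2 : ℂ) * (y:ℂ)) * Kber z y) z := by
  have hE : HasDerivAt (fun w : ℂ =>
      -(1/2) * (w ^ 2 + (y : ℂ) ^ 2) + (Real.sqrt 2 : ℂ) * w * (y : ℂ))
      (-z + (Real.sqrt 2 : ℂ) * (y:ℂ)) z := by
    have h1 : HasDerivAt (fun w : ℂ => w^2) (2*z) z := by
      simpa using hasDerivAt_pow 2 z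
    have h2 := ((h1.add_const ((y:ℂ)^2)).const_mul (-(1/2) : ℂ)).add
      (((hasDerivAt_id z).const_mul ((Real.sqrt 2 : ℂ))).mul_const ((y:ℂ)))
    exact h2.congr_deriv (by ring)
  rw [show ((-z + (Real.sqrt 2:ℂ) * (y:ℂ)) * Kber z y) = Kber z y * (-z + (Real.sqrt 2:ℂ) * (y:ℂ))
    from mul_comm _ _]
  exact hE.cexp

lemma tendsto_exp_quarter_atTop : Tendsto (fun y : ℝ => Real.exp (-(1/4)*y^2)) atTop (nhds 0) := by
  have h : Tendsto (fun y : ℝ => y^2) atTop atTop :=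
    tendsto_pow_atTop (by norm_num : (2:ℕ) ≠ 0)
  have h2 : Tendsto (fun y : ℝ => -(1/4)*y^2) atTop atBot :=
    h.const_mul_atTop_of_neg (by norm_num)
  exact Real.tendsto_exp_atBot.comp h2

lemma tendsto_exp_quarter_atBot : Tendsto (fun y : ℝ => Real.exp (-(1/4)*y^2)) atBot (nhds 0) := by
  have h : Tendsto (fun y : ℝ => y^2) atBot atTop := by
    have h0 : Tendsto (fun y : ℝ => y^2) atTop atTop :=
      tendsto_pow_atTop (by norm_num : (2:ℕ) ≠ 0)
    have := h0.comp tendsto_neg_atBot_atTop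
    exact this.congr fun y => by simp [Function.comp, neg_sq]
  have h2 : Tendsto (fun y : ℝ => -(1/4)*y^2) atBot atBot :=
    h.const_mul_atTop_of_neg (by norm_num)
  exact Real.tendsto_exp_atBot.comp h2

lemma integrable_exp_quarter : Integrable (fun y : ℝ => Real.exp (-(1/4)*y^2)) := by
  have := integrable_exp_neg_mul_sq (show (0:ℝ) < 1/4 by norm_num)
  simpa [neg_mul] using this

lemma integrable_Kber_mul (z : ℂ) (g : ℝ → ℂ) (hg : Continuous g) (M : ℝ)
    (hM : ∀ y, ‖g y‖ ≤ M) : Integrable (fun y => Kber z y * g y) := by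
  refine Integrable.mono' ((integrable_exp_quarter.const_mul
      (Real.exp ((5/2)*(‖z‖)^2) * M))) ?_ ?_
  · exact ((Kber_continuous z).mul hg).aestronglyMeasurable
  · refine Filter.Eventually.of_forall fun y => ?_
    rw [norm_mul]
    have h1 := Kber_norm_le z y (‖z‖) le_rfl
    calc ‖Kber z y‖ * ‖g y‖
        ≤ (Real.exp ((5/2)*(‖z‖)^2) * Real.exp (-(1/4)*y^2)) * M := by
          apply mul_le_mul h1 (hM y) (norm_nonneg _)
          positivity
    _ = Real.exp ((5/2)*(‖z‖)^2) * M * Real.exp (-(1/4)*y^2) := by ring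


/-- The Bargmann transform intertwines the creation operator `A = -d/dx + x`
with multiplication by `√2 z` and the annihilation operator `A† = d/dx + x`
with `√2 d/dz`. -/
theorem bargmann_creation_annihilation (f : SchwartzMap ℝ ℂ) (z : ℂ) :
    bargmannOne (fun x => -deriv (⇑f) x + (x : ℂ) * f x) z
      = (Real.sqrt 2 : ℂ) * z * bargmannOne (⇑f) z ∧
    bargmannOne (fun x => deriv (⇑f) x + (x : ℂ) * f x) z
      = (Real.sqrt 2 : ℂ) * deriv (bargmannOne (⇑f)) z := by
  set c : ℂ := (((Real.pi ^ ((1 : ℝ) / 4))⁻¹ : ℝ) : ℂ) with hc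
  set s : ℂ := (Real.sqrt 2 : ℂ) with hs
  -- bounds
  obtain ⟨C₀, hC₀pos, hC₀⟩ := f.decay 0 0
  have hC₀' : ∀ y : ℝ, ‖f y‖ ≤ C₀ := fun y => by simpa using hC₀ y
  obtain ⟨C₁, hC₁pos, hC₁⟩ := f.decay 1 0
  have hC₁' : ∀ y : ℝ, |y| * ‖f y‖ ≤ C₁ := fun y => by
    simpa [Real.norm_eq_abs] using hC₁ y
  have hfd : ⇑(SchwartzMap.derivCLM ℝ ℂ f) = deriv (⇑f) := funext fun x =>
    SchwartzMap.derivCLM_apply ℝ f x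
  obtain ⟨C₂, hC₂pos, hC₂⟩ := (SchwartzMap.derivCLM ℝ ℂ f).decay 0 0
  have hC₂' : ∀ y : ℝ, ‖deriv (⇑f) y‖ ≤ C₂ := fun y => by
    have := hC₂ y; rw [hfd] at this; simpa using this
  have hdc : Continuous (deriv (⇑f)) := by
    rw [← hfd]; exact (SchwartzMap.derivCLM ℝ ℂ f).continuous
  -- integrability
  have hint0 : Integrable (fun y : ℝ => Kber z y * f y) :=
    integrable_Kber_mul z _ f.continuous C₀ hC₀'
  have hint1 : Integrable (fun y : ℝ => Kber z y * ((y:ℂ) * f y)) := by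
    refine integrable_Kber_mul z _ (by fun_prop) C₁ fun y => ?_
    rw [norm_mul, Complex.norm_real, Real.norm_eq_abs]
    exact hC₁' y
  have hint2 : Integrable (fun y : ℝ => Kber z y * deriv (⇑f) y) :=
    integrable_Kber_mul z _ hdc C₂ hC₂'
  set I0 : ℂ := ∫ y : ℝ, Kber z y * f y with hI0
  set I1 : ℂ := ∫ y : ℝ, Kber z y * ((y:ℂ) * f y) with hI1
  set I2 : ℂ := ∫ y : ℝ, Kber z y * deriv (⇑f) y with hI2
  -- integration by parts
  have hderiv : ∀ y : ℝ, HasDerivAt (fun t : ℝ => Kber z t * f t)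
      (Kber z y * ((s * z - (y:ℂ)) * f y + deriv (⇑f) y)) y := by
    intro y
    have := (Kber_hasDerivAt_y z y).mul (f.differentiableAt.hasDerivAt)
    exact this.congr_deriv (by ring)
  have hDint : Integrable (fun y : ℝ => Kber z y * ((s * z - (y:ℂ)) * f y + deriv (⇑f) y)) := by
    refine integrable_Kber_mul z _ (by fun_prop) (Real.sqrt 2 * ‖z‖ * C₀ + C₁ + C₂)
      fun y => ?_
    have h1 : ‖(s * z - (y:ℂ)) * f y‖ ≤ Real.sqrt 2 * ‖z‖ * C₀ + C₁ := by
      rw [norm_mul]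
      have hA : ‖s * z - (y:ℂ)‖ ≤ Real.sqrt 2 * ‖z‖ + |y| := by
        calc ‖s * z - (y:ℂ)‖ ≤ ‖s * z‖ + ‖(y:ℂ)‖ := norm_sub_le _ _
        _ = Real.sqrt 2 * ‖z‖ + |y| := by
          rw [norm_mul, hs, Complex.norm_real, Complex.norm_real, Real.norm_eq_abs,
            Real.norm_eq_abs, _root_.abs_of_nonneg (Real.sqrt_nonneg 2)]
      calc ‖s * z - (y:ℂ)‖ * ‖f y‖ ≤ (Real.sqrt 2 * ‖z‖ + |y|) * ‖f y‖ :=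
        mul_le_mul_of_nonneg_right hA (norm_nonneg _)
      _ = Real.sqrt 2 * ‖z‖ * ‖f y‖ + |y| * ‖f y‖ := by ring
      _ ≤ Real.sqrt 2 * ‖z‖ * C₀ + C₁ := by
          have := hC₁' y
          have h0 := hC₀' y
          have hpos : (0:ℝ) ≤ Real.sqrt 2 * ‖z‖ := by positivity
          nlinarith
    calc ‖(s * z - (y:ℂ)) * f y + deriv (⇑f) y‖
        ≤ ‖(s * z - (y:ℂ)) * f y‖ + ‖deriv (⇑f) y‖ := norm_add_le _ _
    _ ≤ Real.sqrt 2 * ‖z‖ * C₀ + C₁ + C₂ := by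
        have := hC₂' y; linarith
  have hbound_lim : ∀ y : ℝ, ‖Kber z y * f y‖ ≤
      (Real.exp ((5/2)*(‖z‖)^2) * C₀) * Real.exp (-(1/4)*y^2) := by
    intro y
    rw [norm_mul]
    have h1 := Kber_norm_le z y (‖z‖) le_rfl
    calc ‖Kber z y‖ * ‖f y‖
        ≤ (Real.exp ((5/2)*(‖z‖)^2) * Real.exp (-(1/4)*y^2)) * C₀ := by
          apply mul_le_mul h1 (hC₀' y) (norm_nonneg _); positivity
    _ = (Real.exp ((5/2)*(‖z‖)^2) * C₀) * Real.exp (-(1/4)*y^2) := by ring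
  have hlim_top : Tendsto (fun y : ℝ => Kber z y * f y) atTop (nhds 0) := by
    apply squeeze_zero_norm hbound_lim
    simpa using tendsto_exp_quarter_atTop.const_mul
      (Real.exp ((5/2)*(‖z‖)^2) * C₀)
  have hlim_bot : Tendsto (fun y : ℝ => Kber z y * f y) atBot (nhds 0) := by
    apply squeeze_zero_norm hbound_lim
    simpa using tendsto_exp_quarter_atBot.const_mul
      (Real.exp ((5/2)*(‖z‖)^2) * C₀)
  have key1 : ∫ y in Set.Iic (0:ℝ), Kber z y * ((s * z - (y:ℂ)) * f y + deriv (⇑f) y)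
      = Kber z 0 * f 0 - 0 :=
    integral_Iic_of_hasDerivAt_of_tendsto' (fun x _ => hderiv x) hDint.integrableOn hlim_bot
  have key2 : ∫ y in Set.Ioi (0:ℝ), Kber z y * ((s * z - (y:ℂ)) * f y + deriv (⇑f) y)
      = 0 - Kber z 0 * f 0 :=
    integral_Ioi_of_hasDerivAt_of_tendsto' (fun x _ => hderiv x) hDint.integrableOn hlim_top
  have keyIBP : ∫ y : ℝ, Kber z y * ((s * z - (y:ℂ)) * f y + deriv (⇑f) y) = 0 := by
    rw [← intervalIntegral.integral_Iic_add_Ioi (b := (0:ℝ)) hDint.integrableOn hDint.integrableOn, key1, key2]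
    ring
  have hsplit : ∫ y : ℝ, Kber z y * ((s * z - (y:ℂ)) * f y + deriv (⇑f) y)
      = s * z * I0 - I1 + I2 := by
    have e : ∀ y : ℝ, Kber z y * ((s * z - (y:ℂ)) * f y + deriv (⇑f) y)
        = (s * z * (Kber z y * f y) - Kber z y * ((y:ℂ) * f y)) + Kber z y * deriv (⇑f) y :=
      fun y => by ring
    simp_rw [e]
    have ha : Integrable (fun y : ℝ => s * z * (Kber z y * f y)) volume :=
      hint0.const_mul (s*z)
    have hab : Integrable (fun y : ℝ =>
        s * z * (Kber z y * f y) - Kber z y * ((y:ℂ) * f y)) volume := ha.sub hint1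
    rw [integral_add hab hint2, integral_sub ha hint1, integral_const_mul, ← hI0, ← hI1, ← hI2]
  have hIBP : I2 = I1 - s * z * I0 := by
    have := keyIBP; rw [hsplit] at this; linear_combination this
  -- derivative under the integral sign
  set R : ℝ := ‖z‖ + 1 with hR
  have hRpos : (0:ℝ) < R := by positivity
  have hdd := hasDerivAt_integral_of_dominated_loc_of_deriv_le (μ := volume)
    (F := fun (w : ℂ) (y : ℝ) => Kber w y * f y)
    (F' := fun (w : ℂ) (y : ℝ) => ((-w + s * (y:ℂ)) * Kber w y) * f y)
    (x₀ := z)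
    (bound := fun y : ℝ => (Real.exp ((5/2)*R^2) * (R * C₀ + Real.sqrt 2 * C₁))
      * Real.exp (-(1/4)*y^2))
    (s := Metric.ball z 1) (Metric.ball_mem_nhds z one_pos)
    (Filter.Eventually.of_forall fun w =>
      ((Kber_continuous w).mul f.continuous).aestronglyMeasurable)
    hint0
    (by
      apply Continuous.aestronglyMeasurable
      have : Continuous (fun y : ℝ => (-z + s * (y:ℂ))) := by fun_prop
      exact ((this.mul (Kber_continuous z)).mul f.continuous))
    (Filter.Eventually.of_forall (fun y => by
      intro w hw
      have hwR : ‖w‖ ≤ R := by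
        have hd : dist w z < 1 := Metric.mem_ball.1 hw
        rw [Complex.dist_eq] at hd
        calc ‖w‖ = ‖w - z + z‖ := by ring_nf
        _ ≤ ‖w - z‖ + ‖z‖ := norm_add_le _ _
        _ ≤ R := by rw [hR]; linarith
      rw [norm_mul, norm_mul]
      have hA : ‖-w + s * (y:ℂ)‖ ≤ R + Real.sqrt 2 * |y| := by
        calc ‖-w + s * (y:ℂ)‖ ≤ ‖-w‖ + ‖s * (y:ℂ)‖ := norm_add_le _ _
        _ = ‖w‖ + Real.sqrt 2 * |y| := by
          rw [norm_neg, norm_mul, hs, Complex.norm_real, Complex.norm_real, Real.norm_eq_abs,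
            Real.norm_eq_abs, _root_.abs_of_nonneg (Real.sqrt_nonneg 2)]
        _ ≤ R + Real.sqrt 2 * |y| := by linarith
      have hK := Kber_norm_le w y R hwR
      have hgood : ‖-w + s * (y:ℂ)‖ * ‖f y‖ ≤ R * C₀ + Real.sqrt 2 * C₁ := by
        calc ‖-w + s * (y:ℂ)‖ * ‖f y‖ ≤ (R + Real.sqrt 2 * |y|) * ‖f y‖ :=
          mul_le_mul_of_nonneg_right hA (norm_nonneg _)
        _ = R * ‖f y‖ + Real.sqrt 2 * (|y| * ‖f y‖) := by ring
        _ ≤ R * C₀ + Real.sqrt 2 * C₁ := by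
            have h0 := hC₀' y
            have h1 := hC₁' y
            have := Real.sqrt_nonneg 2
            nlinarith
      calc ‖-w + s * (y:ℂ)‖ * ‖Kber w y‖ * ‖f y‖
          = ‖Kber w y‖ * (‖-w + s * (y:ℂ)‖ * ‖f y‖) := by ring
      _ ≤ (Real.exp ((5/2)*R^2) * Real.exp (-(1/4)*y^2)) * (R * C₀ + Real.sqrt 2 * C₁) := by
          apply mul_le_mul hK hgood (by positivity) (by positivity)
      _ = (Real.exp ((5/2)*R^2) * (R * C₀ + Real.sqrt 2 * C₁)) * Real.exp (-(1/4)*y^2) := by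
          ring))
    ((integrable_exp_quarter.const_mul _))
    (Filter.Eventually.of_forall (fun y => fun w _ =>
      (Kber_hasDerivAt_z w y).mul_const (f y)))
  have hderivI : HasDerivAt (fun w : ℂ => ∫ y : ℝ, Kber w y * f y)
      (∫ y : ℝ, ((-z + s * (y:ℂ)) * Kber z y) * f y) z := hdd.2
  have hB : HasDerivAt (bargmannOne (⇑f)) (c * ∫ y : ℝ, ((-z + s * (y:ℂ)) * Kber z y) * f y) z := by
    have := hderivI.const_mul c
    exact this
  have hF'val : ∫ y : ℝ, ((-z + s * (y:ℂ)) * Kber z y) * f y = s * I1 - z * I0 := by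
    have e : ∀ y : ℝ, ((-z + s * (y:ℂ)) * Kber z y) * f y
        = s * (Kber z y * ((y:ℂ) * f y)) - z * (Kber z y * f y) := fun y => by ring
    simp_rw [e]
    have ha : Integrable (fun y : ℝ => s * (Kber z y * ((y:ℂ) * f y))) volume :=
      hint1.const_mul s
    have hb : Integrable (fun y : ℝ => z * (Kber z y * f y)) volume := hint0.const_mul z
    rw [integral_sub ha hb, integral_const_mul, integral_const_mul, ← hI0, ← hI1]
  have hss : s * s = 2 := by
    rw [hs, ← Complex.ofReal_mul, Real.mul_self_sqrt (by norm_num : (0:ℝ) ≤ 2)]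
    norm_num
  constructor
  · -- creation
    have hLHS : bargmannOne (fun x => -deriv (⇑f) x + (x : ℂ) * f x) z = c * (-I2 + I1) := by
      rw [bargmannOne_eq]
      congr 1
      have e : ∀ y : ℝ, Kber z y * (-deriv (⇑f) y + (y:ℂ) * f y)
          = -(Kber z y * deriv (⇑f) y) + Kber z y * ((y:ℂ) * f y) := fun y => by ring
      simp_rw [e]
      have hn : Integrable (fun y : ℝ => -(Kber z y * deriv (⇑f) y)) volume := hint2.neg
      rw [integral_add hn hint1, integral_neg, ← hI1, ← hI2]
    rw [hLHS, bargmannOne_eq, ← hI0, hIBP]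
    ring
  · -- annihilation
    have hLHS : bargmannOne (fun x => deriv (⇑f) x + (x : ℂ) * f x) z = c * (I2 + I1) := by
      rw [bargmannOne_eq]
      congr 1
      have e : ∀ y : ℝ, Kber z y * (deriv (⇑f) y + (y:ℂ) * f y)
          = Kber z y * deriv (⇑f) y + Kber z y * ((y:ℂ) * f y) := fun y => by ring
      simp_rw [e]
      rw [integral_add hint2 hint1, ← hI1, ← hI2]
    rw [hLHS, hB.deriv, hF'val, hIBP]
    linear_combination (-(c * I1)) * hss
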